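/- arXiv:1808.04633 — 6 statements merged into one kernel-verified Lean document; each statement's English description precedes it below -/
import Mathlib

section
/- Let 0 < α < 1 and let θ̃ ∈ [0, π/2). For θ̄ ∈ [0, π/2 + θ̃), define F(θ̄) = (cos θ̃)^(α-1) · cos(αθ̄ - θ̃) / (cos(θ̄ - θ̃))^α. Then F(θ̄) ≥ F(0) = 1 for all θ̄ ∈ [0, π/2 + θ̃). -/
/-!
Since `αθ̄ - θ̃ = α (θ̄ - θ̃) + (1 - α) (-θ̃)` and cosine is nonnegative and concave on
`[-π/2, π/2]`, weighted AM-GM followed by concavity gives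
`cos (θ̄ - θ̃) ^ α * cos θ̃ ^ (1 - α) ≤ cos (αθ̄ - θ̃)`, which is `F(θ̄) ≥ 1`.
-/

open Real Set

theorem ConcaveOn.rpow_mul_rpow_le {E : Type*} [AddCommGroup E] [Module ℝ E] {s : Set E}
    {f : E → ℝ} (hf : ConcaveOn ℝ s f) {x y : E} (hx : x ∈ s) (hy : y ∈ s)
    (hfx : 0 ≤ f x) (hfy : 0 ≤ f y) {a b : ℝ} (ha : 0 ≤ a) (hb : 0 ≤ b) (hab : a + b = 1) :
    f x ^ a * f y ^ b ≤ f (a • x + b • y) :=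
  calc f x ^ a * f y ^ b ≤ a * f x + b * f y :=
        geom_mean_le_arith_mean2_weighted ha hb hfx hfy hab
    _ ≤ f (a • x + b • y) := hf.2 hx hy ha hb hab

theorem Real.cos_rpow_mul_cos_rpow_le_cos {x y a b : ℝ} (hx : x ∈ Icc (-(π / 2)) (π / 2))
    (hy : y ∈ Icc (-(π / 2)) (π / 2)) (ha : 0 ≤ a) (hb : 0 ≤ b) (hab : a + b = 1) :
    cos x ^ a * cos y ^ b ≤ cos (a * x + b * y) :=
  strictConcaveOn_cos_Icc.concaveOn.rpow_mul_rpow_le hx hy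
    (cos_nonneg_of_mem_Icc hx) (cos_nonneg_of_mem_Icc hy) ha hb hab

/-- F(θ̄) = (cos θ̃)^(α-1) · cos(αθ̄ - θ̃) / (cos(θ̄ - θ̃))^α satisfies F(0)=1 and F(θ̄) ≥ 1. -/
theorem stmt_0 (α θt : ℝ) (hα0 : 0 < α) (hα1 : α < 1)
    (hθt0 : 0 ≤ θt) (hθt : θt < π / 2) :
    (Real.cos θt ^ (α - 1) * Real.cos (α * 0 - θt) / Real.cos (0 - θt) ^ α = 1) ∧
    ∀ θb : ℝ, 0 ≤ θb → θb < π / 2 + θt →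
      Real.cos θt ^ (α - 1) * Real.cos (α * θb - θt) / Real.cos (θb - θt) ^ α ≥
      Real.cos θt ^ (α - 1) * Real.cos (α * 0 - θt) / Real.cos (0 - θt) ^ α := by
  have hcos : 0 < cos θt := cos_pos_of_mem_Ioo ⟨by linarith [pi_pos], hθt⟩
  have hF0 : cos θt ^ (α - 1) * cos (α * 0 - θt) / cos (0 - θt) ^ α = 1 := by
    rw [mul_zero, zero_sub, cos_neg, ← rpow_add_one hcos.ne', sub_add_cancel,
      div_self (rpow_pos_of_pos hcos α).ne']
  refine ⟨hF0, fun θb hθb0 hθb => ?_⟩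
  have hcos' : 0 < cos (θb - θt) := cos_pos_of_mem_Ioo ⟨by linarith, by linarith⟩
  have key : cos (θb - θt) ^ α * cos (-θt) ^ (1 - α) ≤ cos (α * θb - θt) := by
    convert cos_rpow_mul_cos_rpow_le_cos (x := θb - θt) (y := -θt)
      ⟨by linarith, by linarith⟩ ⟨by linarith, by linarith⟩ hα0.le (by linarith)
      (add_sub_cancel α 1) using 2
    ring
  rw [cos_neg, ← le_div_iff₀ (rpow_pos_of_pos hcos _)] at key
  rw [hF0, ge_iff_le, one_le_div (rpow_pos_of_pos hcos' α), show α - 1 = -(1 - α) by ring,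
    rpow_neg hcos.le, inv_mul_eq_div]
  exact key
end

section
/- Let 0 < α < 1 and let θ ∈ [π/2, π). If z is a complex number with z ≠ 0 and |arg z| ≤ θ, then (z+1)^α lies in the set { w ∈ ℂ : w - 1 ≠ 0 and |arg(w - 1)| ≤ θ } ∪ {1}; equivalently, ((z+1)^α - 1) ∈ Σ_θ ∪ {0}, where Σ_θ = { w ∈ ℂ : |arg w| ≤ θ }. -/
/-!
For `0 < θ < π`, the condition `|arg v| ≤ θ` amounts to
`sin θ * re v - cos θ * |im v| ≥ 0`. Writing `z + 1 = R e^{± iβ}` with `β = |arg (z + 1)|`, the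
hypothesis on `z` becomes `sin θ ≤ R sin (θ - β)` and the claim becomes
`sin θ ≤ R^α sin (θ - α β)`. The second inequality follows from the first because `sin` is
log-concave on `[0, π]`: `sin (θ - α β) ≥ (sin θ)^(1 - α) (sin (θ - β))^α`.
-/

open Real Complex Set

namespace Real

lemma sin_rpow_mul_sin_rpow_le {x y α : ℝ} (hx : x ∈ Icc 0 π) (hy : y ∈ Icc 0 π)
    (hα0 : 0 ≤ α) (hα1 : α ≤ 1) :
    sin x ^ (1 - α) * sin y ^ α ≤ sin ((1 - α) * x + α * y) :=
  calc sin x ^ (1 - α) * sin y ^ α ≤ (1 - α) * sin x + α * sin y :=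
        geom_mean_le_arith_mean2_weighted (by linarith) hα0
          (sin_nonneg_of_nonneg_of_le_pi hx.1 hx.2) (sin_nonneg_of_nonneg_of_le_pi hy.1 hy.2)
          (by ring)
    _ ≤ sin ((1 - α) * x + α * y) :=
        strictConcaveOn_sin_Icc.concaveOn.2 hx hy (by linarith) hα0 (by ring)

lemma sin_le_rpow_mul_sin_sub_mul {α θ β R : ℝ} (hα0 : 0 < α) (hα1 : α ≤ 1)
    (hθ : θ ∈ Ioo 0 π) (hβ : β ∈ Icc 0 π) (hR : 0 ≤ R) (h : sin θ ≤ R * sin (θ - β)) :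
    sin θ ≤ R ^ α * sin (θ - α * β) := by
  have hsθ : 0 < sin θ := sin_pos_of_pos_of_lt_pi hθ.1 hθ.2
  have hsθβ : 0 < sin (θ - β) := pos_of_mul_pos_right (hsθ.trans_le h) hR
  have hβθ : β ≤ θ := by
    by_contra! hlt
    exact (sin_nonpos_of_nonpos_of_neg_pi_le (by linarith) (by linarith [hβ.2, hθ.1])).not_gt hsθβ
  calc sin θ = sin θ ^ (1 - α) * sin θ ^ α := by rw [← rpow_add hsθ]; simp
    _ ≤ sin θ ^ (1 - α) * (R * sin (θ - β)) ^ α := by gcongr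
    _ = R ^ α * (sin θ ^ (1 - α) * sin (θ - β) ^ α) := by rw [mul_rpow hR hsθβ.le]; ring
    _ ≤ R ^ α * sin ((1 - α) * θ + α * (θ - β)) := by
        gcongr
        exact sin_rpow_mul_sin_rpow_le (Ioo_subset_Icc_self hθ) ⟨by linarith, by linarith [hβ.1, hθ.2]⟩
          hα0.le hα1
    _ = R ^ α * sin (θ - α * β) := by ring_nf

end Real

namespace Complex

lemma re_eq_norm_mul_cos_abs_arg (v : ℂ) : v.re = ‖v‖ * Real.cos |v.arg| := by
  rw [Real.cos_abs, norm_mul_cos_arg]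

lemma abs_im_eq_norm_mul_sin_abs_arg (v : ℂ) : |v.im| = ‖v‖ * Real.sin |v.arg| := by
  rw [← norm_mul_sin_arg, abs_mul, abs_norm,
    Real.abs_sin_eq_sin_abs_of_abs_le_pi (abs_arg_le_pi v)]

lemma abs_arg_le_iff {θ : ℝ} (hθ : θ ∈ Ioo 0 π) (v : ℂ) :
    |v.arg| ≤ θ ↔ 0 ≤ Real.sin θ * v.re - Real.cos θ * |v.im| := by
  have hpolar : Real.sin θ * v.re - Real.cos θ * |v.im| = ‖v‖ * Real.sin (θ - |v.arg|) := by
    rw [re_eq_norm_mul_cos_abs_arg, abs_im_eq_norm_mul_sin_abs_arg, Real.sin_sub]; ring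
  rcases eq_or_ne v 0 with rfl | hv
  · simp [hθ.1.le]
  rw [hpolar, mul_nonneg_iff_of_pos_left (norm_pos_iff.2 hv)]
  constructor
  · intro h
    exact Real.sin_nonneg_of_nonneg_of_le_pi (by linarith) (by linarith [abs_nonneg v.arg, hθ.2])
  · intro h
    by_contra! hlt
    exact (Real.sin_neg_of_neg_of_neg_pi_lt (by linarith)
      (by linarith [abs_arg_le_pi v, hθ.1])).not_ge h

lemma sin_mul_re_sub_one_sub_cos_mul_abs_im {v : ℂ} {r γ : ℝ} (hre : v.re = r * Real.cos γ)
    (him : |v.im| = r * Real.sin γ) (θ : ℝ) :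
    Real.sin θ * (v - 1).re - Real.cos θ * |(v - 1).im| = r * Real.sin (θ - γ) - Real.sin θ := by
  rw [sub_re, one_re, sub_im, one_im, sub_zero, hre, him, Real.sin_sub]; ring

lemma cpow_ofReal_re_eq_norm_rpow_mul_cos_abs_arg (w : ℂ) (α : ℝ) :
    (w ^ (α : ℂ)).re = ‖w‖ ^ α * Real.cos (α * |w.arg|) := by
  rcases abs_choice w.arg with h | h <;> rw [cpow_ofReal_re, h] <;> ring_nf
  rw [Real.cos_neg]

lemma abs_cpow_ofReal_im_eq_norm_rpow_mul_sin_abs_arg (w : ℂ) {α : ℝ} (hα0 : 0 ≤ α)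
    (hα1 : α ≤ 1) :
    |(w ^ (α : ℂ)).im| = ‖w‖ ^ α * Real.sin (α * |w.arg|) := by
  have hle : |w.arg * α| ≤ π := by
    rw [abs_mul, abs_of_nonneg hα0]
    nlinarith [abs_arg_le_pi w, abs_nonneg w.arg]
  rw [cpow_ofReal_im, abs_mul, abs_of_nonneg (Real.rpow_nonneg (norm_nonneg w) α),
    Real.abs_sin_eq_sin_abs_of_abs_le_pi hle, abs_mul, abs_of_nonneg hα0, mul_comm |w.arg|]

end Complex


theorem stmt_2_general (α θ : ℝ) (hα0 : 0 < α) (hα1 : α < 1)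
    (hθ1 : π / 2 ≤ θ) (hθ2 : θ < π)
    (z : ℂ) (harg : |z.arg| ≤ θ) :
    (z + 1) ^ (α : ℂ) - 1 = 0 ∨ |((z + 1) ^ (α : ℂ) - 1).arg| ≤ θ := by
  have hθ : θ ∈ Ioo 0 π := ⟨by linarith [pi_pos], hθ2⟩
  right
  set w := z + 1
  have hw := sin_mul_re_sub_one_sub_cos_mul_abs_im (re_eq_norm_mul_cos_abs_arg w)
    (abs_im_eq_norm_mul_sin_abs_arg w) θ
  have hwα := sin_mul_re_sub_one_sub_cos_mul_abs_im
    (cpow_ofReal_re_eq_norm_rpow_mul_cos_abs_arg w α)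
    (abs_cpow_ofReal_im_eq_norm_rpow_mul_sin_abs_arg w hα0.le hα1.le) θ
  rw [abs_arg_le_iff hθ, show z = w - 1 by simp [w], hw, sub_nonneg] at harg
  rw [abs_arg_le_iff hθ, hwα, sub_nonneg]
  exact Real.sin_le_rpow_mul_sin_sub_mul hα0 hα1.le hθ ⟨abs_nonneg _, abs_arg_le_pi w⟩
    (norm_nonneg w) harg

/-- For z in the sector Σ_θ (θ ∈ [π/2, π)), ((z+1)^α - 1) ∈ Σ_θ ∪ {0}. -/
theorem stmt_2 (α θ : ℝ) (hα0 : 0 < α) (hα1 : α < 1)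
    (hθ1 : π / 2 ≤ θ) (hθ2 : θ < π)
    (z : ℂ) (hz : z ≠ 0) (harg : |z.arg| ≤ θ) :
    (z + 1) ^ (α : ℂ) - 1 = 0 ∨ |((z + 1) ^ (α : ℂ) - 1).arg| ≤ θ :=
  stmt_2_general α θ hα0 hα1 hθ1 hθ2 z harg
end

section
/- Let 0 < α < 1, λ > 0, and θ ∈ [π/2, π). For every z ∈ Σ_θ (i.e., z ≠ 0 and |arg z| ≤ θ), the quantity (z + λ)^α - λ^α lies in Σ_θ ∪ {0}. -/
/-!
Differentiating `t ↦ (r + t z)^α` gives `(z + r)^α - r^α = ∫₀¹ α (r + t z)^(α-1) z dt`. For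
`0 ≤ arg z < π` the point `r + t z` has argument `ψ ∈ [0, arg z]`, so the integrand has argument
`(α - 1) ψ + arg z ∈ [α arg z, arg z]`. For `0 < φ < π` the sector `0 ≤ arg ≤ φ` (with `0`) is the
intersection of two closed half-planes, hence a convex cone, and the integral stays in it.
The case `arg z < 0` follows by complex conjugation.
-/

open Real Complex

namespace Complex

open Set ComplexConjugate

lemma im_mul_exp_neg_mul_I (w : ℂ) (φ : ℝ) :
    (w * exp (-(φ * I))).im = ‖w‖ * Real.sin (arg w - φ) := by
  rw [← neg_mul, ← ofReal_neg, mul_im, exp_ofReal_mul_I_re, exp_ofReal_mul_I_im,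
    ← norm_mul_sin_arg w, ← norm_mul_cos_arg w, Real.cos_neg, Real.sin_neg, Real.sin_sub]
  ring

/-- For `φ = 0` the right-hand side would also admit the negative reals. -/
lemma arg_mem_Icc_zero_iff {φ : ℝ} (hφ₀ : 0 < φ) (hφ : φ < π) {w : ℂ} :
    arg w ∈ Icc 0 φ ↔ 0 ≤ w.im ∧ (w * exp (-(φ * I))).im ≤ 0 := by
  rw [im_mul_exp_neg_mul_I, mem_Icc, arg_nonneg_iff]
  refine and_congr_right fun him => ⟨fun h => ?_, fun h => ?_⟩
  · exact mul_nonpos_of_nonneg_of_nonpos (norm_nonneg w)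
      (Real.sin_nonpos_of_nonpos_of_neg_pi_le (by linarith) (by linarith [arg_nonneg_iff.2 him]))
  · by_contra! hlt
    have hw : w ≠ 0 := by rintro rfl; simp at hlt; linarith
    have : 0 < ‖w‖ * Real.sin (arg w - φ) :=
      mul_pos (norm_pos_iff.2 hw) (Real.sin_pos_of_pos_of_lt_pi (by linarith)
        (by linarith [arg_le_pi w]))
    linarith

lemma arg_add_mem_Icc {φ : ℝ} (hφ₀ : 0 < φ) (hφ : φ < π) {v w : ℂ} (hv : arg v ∈ Icc 0 φ)
    (hw : arg w ∈ Icc 0 φ) : arg (v + w) ∈ Icc 0 φ := by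
  rw [arg_mem_Icc_zero_iff hφ₀ hφ] at hv hw ⊢
  simp only [add_im, add_mul]
  constructor <;> linarith [hv.1, hv.2, hw.1, hw.2]

lemma arg_intervalIntegral_mem_Icc {f : ℝ → ℂ} {a b φ : ℝ} (hab : a ≤ b)
    (hf : IntervalIntegrable f MeasureTheory.volume a b) (hφ₀ : 0 < φ) (hφ : φ < π)
    (h : ∀ t ∈ Icc a b, arg (f t) ∈ Icc 0 φ) : arg (∫ t in a..b, f t) ∈ Icc 0 φ := by
  simp only [arg_mem_Icc_zero_iff hφ₀ hφ] at h ⊢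
  constructor
  · rw [← RCLike.im_to_complex, ← intervalIntegral.intervalIntegral_im hf]
    exact intervalIntegral.integral_nonneg hab fun t ht => (h t ht).1
  · rw [← intervalIntegral.integral_mul_const, ← RCLike.im_to_complex,
      ← intervalIntegral.intervalIntegral_im (hf.mul_const _), ← neg_nonneg,
      ← intervalIntegral.integral_neg]
    exact intervalIntegral.integral_nonneg hab fun t ht => neg_nonneg.2 (h t ht).2

lemma arg_cpow_ofReal {w : ℂ} (hw : w ≠ 0) {c : ℝ} (h : c * arg w ∈ Ioc (-π) π) :
    arg (w ^ (c : ℂ)) = c * arg w := by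
  have hpolar : w ^ (c : ℂ) =
      (‖w‖ ^ c : ℝ) * (Real.cos (c * arg w) + Real.sin (c * arg w) * I) := by
    apply Complex.ext <;>
      simp [cpow_ofReal_re, cpow_ofReal_im, mul_comm, -ofReal_cos, -ofReal_sin]
  rw [hpolar, ofReal_cos, ofReal_sin,
    arg_mul_cos_add_sin_mul_I (rpow_pos_of_pos (norm_pos_iff.2 hw) c) h]

lemma ofReal_add_ofReal_mul_mem_slitPlane {r t : ℝ} (hr : 0 < r) (ht : 0 ≤ t) {z : ℂ}
    (hz : arg z ≠ π) : (r : ℂ) + t * z ∈ slitPlane := by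
  rw [mem_slitPlane_iff]
  by_cases him : z.im = 0
  · have hre : 0 ≤ z.re := by
      by_contra! hre
      exact hz (arg_eq_pi_iff.2 ⟨hre, him⟩)
    left
    simp only [add_re, ofReal_re, mul_re, ofReal_im, zero_mul, sub_zero]
    positivity
  · rcases ht.eq_or_lt with rfl | ht
    · simp [hr]
    · simp [ht.ne', him]

lemma arg_ofReal_add_ofReal_mul_mem_Icc {r t : ℝ} (hr : 0 < r) (ht : 0 ≤ t) {z : ℂ}
    (hz₀ : 0 ≤ arg z) (hz : arg z < π) : arg ((r : ℂ) + t * z) ∈ Icc 0 (arg z) := by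
  rcases hz₀.eq_or_lt with hz₀ | hz₀
  · rw [← hz₀, Icc_self, mem_singleton_iff, arg_eq_zero_iff]
    obtain ⟨hre, him⟩ := arg_eq_zero_iff.1 hz₀.symm
    simp only [add_re, ofReal_re, mul_re, ofReal_im, zero_mul, sub_zero, add_im, mul_im, him]
    exact ⟨by positivity, by simp⟩
  · refine arg_add_mem_Icc hz₀ hz (by simp [arg_ofReal_of_nonneg hr.le, hz₀.le]) ?_
    rcases ht.eq_or_lt with rfl | ht
    · simp [hz₀.le]
    · rw [arg_real_mul z ht]
      exact ⟨hz₀.le, le_rfl⟩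

lemma arg_cpow_mul_mem_Icc {w z : ℂ} (hw : w ≠ 0) (hz : z ≠ 0) (hwz : arg w ∈ Icc 0 (arg z))
    (hzπ : arg z < π) {c : ℝ} (hc : c ∈ Icc (-1) 0) : arg (w ^ (c : ℂ) * z) ∈ Icc 0 (arg z) := by
  obtain ⟨hc₁, hc₀⟩ := hc
  obtain ⟨hw₀, hwz⟩ := hwz
  have hcw : c * arg w ∈ Ioc (-π) π := ⟨by nlinarith, by nlinarith⟩
  have hwc : w ^ (c : ℂ) ≠ 0 := cpow_ne_zero_iff.2 (Or.inl hw)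
  rw [arg_mul hwc hz, arg_cpow_ofReal hw hcw]
  · exact ⟨by nlinarith, by nlinarith⟩
  · rw [arg_cpow_ofReal hw hcw]
    constructor <;> nlinarith

theorem arg_add_cpow_sub_cpow_mem_Icc {α r φ : ℝ} (hα₀ : 0 < α) (hα₁ : α ≤ 1) (hr : 0 < r)
    (hφ₀ : 0 < φ) (hφ : φ < π) {z : ℂ} (hz : z ≠ 0) (hzφ : arg z ∈ Icc 0 φ) :
    arg ((z + r) ^ (α : ℂ) - (r : ℂ) ^ (α : ℂ)) ∈ Icc 0 φ := by
  have hzπ : arg z < π := hzφ.2.trans_lt hφ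
  set W : ℝ → ℂ := fun t => r + t * z
  have hslit : ∀ t, 0 ≤ t → W t ∈ slitPlane := fun t ht =>
    ofReal_add_ofReal_mul_mem_slitPlane hr ht hzπ.ne
  have hderiv : ∀ t ∈ uIcc (0 : ℝ) 1,
      HasDerivAt (fun s : ℝ => W s ^ (α : ℂ)) (α * W t ^ ((α : ℂ) - 1) * z) t := by
    intro t ht
    rw [uIcc_of_le zero_le_one] at ht
    have hline : HasDerivAt (fun s : ℂ => r + s * z) z t := by
      simpa using ((hasDerivAt_id (t : ℂ)).mul_const z).const_add (r : ℂ)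
    exact (hline.cpow_const (hslit t ht.1)).comp_ofReal
  have hcont : ContinuousOn (fun t => α * W t ^ ((α : ℂ) - 1) * z) (uIcc 0 1) := by
    refine (continuousOn_const.mul (ContinuousOn.cpow_const (by fun_prop) fun t ht => ?_)).mul
      continuousOn_const
    rw [uIcc_of_le zero_le_one] at ht
    exact hslit t ht.1
  have hFTC : (z + r) ^ (α : ℂ) - (r : ℂ) ^ (α : ℂ) =
      ∫ t in (0 : ℝ)..1, α * W t ^ ((α : ℂ) - 1) * z := by
    rw [intervalIntegral.integral_eq_sub_of_hasDerivAt hderiv hcont.intervalIntegrable]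
    simp [W, add_comm]
  rw [hFTC]
  refine arg_intervalIntegral_mem_Icc zero_le_one hcont.intervalIntegrable hφ₀ hφ fun t ht => ?_
  have harg := arg_cpow_mul_mem_Icc (slitPlane_ne_zero (hslit t ht.1)) hz
    (arg_ofReal_add_ofReal_mul_mem_Icc hr ht.1 hzφ.1 hzπ) hzπ (c := α - 1)
    ⟨by linarith, by linarith⟩
  rw [mul_assoc, arg_real_mul _ hα₀]
  push_cast at harg
  exact ⟨harg.1, harg.2.trans hzφ.2⟩

lemma conj_add_cpow_sub_cpow {α r : ℝ} (hr : 0 ≤ r) {z : ℂ} (hz : arg (z + r) ≠ π) :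
    (conj z + r) ^ (α : ℂ) - (r : ℂ) ^ (α : ℂ) = conj ((z + r) ^ (α : ℂ) - (r : ℂ) ^ (α : ℂ)) := by
  have hr' : arg (r : ℂ) ≠ π := by rw [arg_ofReal_of_nonneg hr]; exact pi_ne_zero.symm
  conv_lhs => rw [← conj_ofReal r, ← map_add, conj_cpow _ _ hz, conj_cpow _ _ hr', conj_ofReal]
  rw [map_sub]

lemma abs_arg_conj (w : ℂ) : |arg (conj w)| = |arg w| := by
  rw [arg_conj]
  split_ifs with h
  · rw [h]
  · exact abs_neg _

theorem abs_arg_add_cpow_sub_cpow_le {α r φ : ℝ} (hα₀ : 0 < α) (hα₁ : α ≤ 1) (hr : 0 < r)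
    (hφ₀ : 0 < φ) (hφ : φ < π) {z : ℂ} (hz : z ≠ 0) (hzφ : |arg z| ≤ φ) :
    |arg ((z + r) ^ (α : ℂ) - (r : ℂ) ^ (α : ℂ))| ≤ φ := by
  obtain ⟨hzφ₁, hzφ₂⟩ := abs_le.1 hzφ
  rcases le_or_gt 0 (arg z) with hz₀ | hz₀
  · have h := arg_add_cpow_sub_cpow_mem_Icc hα₀ hα₁ hr hφ₀ hφ hz ⟨hz₀, hzφ₂⟩
    exact (abs_of_nonneg h.1).trans_le h.2
  · have hconj : arg (conj z) ∈ Icc 0 φ := by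
      rw [arg_conj, if_neg (by linarith [pi_pos])]
      constructor <;> linarith
    have hπ : arg (z + r) ≠ π := by
      rw [Ne, arg_eq_pi_iff, not_and_or]
      right
      simpa using (arg_neg_iff.1 hz₀).ne
    have h := arg_add_cpow_sub_cpow_mem_Icc hα₀ hα₁ hr hφ₀ hφ (by simpa using hz) hconj
    rw [conj_add_cpow_sub_cpow hr.le hπ] at h
    rw [← abs_arg_conj]
    exact (abs_of_nonneg h.1).trans_le h.2

end Complex

/-- For z ∈ Σ_θ, λ > 0, 0 < α < 1, the quantity (z+λ)^α - λ^α lies in Σ_θ ∪ {0}. -/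
theorem stmt_3 (α lam θ : ℝ) (hα0 : 0 < α) (hα1 : α < 1) (hlam : 0 < lam)
    (hθ1 : π / 2 ≤ θ) (hθ2 : θ < π)
    (z : ℂ) (hz : z ≠ 0) (harg : |z.arg| ≤ θ) :
    (z + (lam : ℂ)) ^ (α : ℂ) - ((lam : ℂ)) ^ (α : ℂ) = 0 ∨
      |((z + (lam : ℂ)) ^ (α : ℂ) - ((lam : ℂ)) ^ (α : ℂ)).arg| ≤ θ :=
  Or.inr <| abs_arg_add_cpow_sub_cpow_le hα0 hα1.le hlam (by linarith [pi_pos]) hθ2 hz harg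
end

section
/- Let 0 < α < 1, λ ≥ 0, and let c_ε > 0. There exists a constant C > 0 such that for every complex number z_ε with |z_ε| ≥ c_ε and |arg z_ε| ≤ θ for some fixed θ < π, one has |(λ + z_ε)^α - λ^α| ≥ C |z_ε|^α. -/
open Real Complex

/-!
For `‖z‖ ≥ 4^(1/α) λ` the bound follows from `‖z‖^α ≤ (‖z‖ - λ)^α + λ^α` (subadditivity of
`t ↦ t^α`) and `λ^α ≤ ‖z‖^α / 4`. The rest of the sector lies in the compact set
`{cε ≤ ‖z‖ ≤ 4^(1/α) λ, ‖z‖ cos θ ≤ re z}`, on which `λ + z` stays in the slit plane, so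
`z ↦ ‖(λ + z)^α - λ^α‖ / ‖z‖^α` is continuous there; it is also positive, because `w ↦ w^α` is
injective for `0 < α ≤ 1`, and hence bounded below by a positive constant.
-/

lemma Complex.cpow_ofReal_cpow_inv {α : ℝ} (hα0 : 0 < α) (hα1 : α ≤ 1) (x : ℂ) :
    (x ^ (α : ℂ)) ^ (α : ℂ)⁻¹ = x := by
  have him : (log x * α).im = x.arg * α := by simp [log_im]
  rw [← cpow_mul _ (by rw [him]; nlinarith [neg_pi_lt_arg x, arg_le_pi x])
    (by rw [him]; nlinarith [neg_pi_lt_arg x, arg_le_pi x]),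
    mul_inv_cancel₀ (ofReal_ne_zero.2 hα0.ne'), cpow_one]

lemma Complex.cpow_ofReal_left_injective {α : ℝ} (hα0 : 0 < α) (hα1 : α ≤ 1) :
    Function.Injective fun x : ℂ ↦ x ^ (α : ℂ) :=
  Function.LeftInverse.injective (g := fun y : ℂ ↦ y ^ (α : ℂ)⁻¹)
    (cpow_ofReal_cpow_inv hα0 hα1)

lemma Complex.ofReal_add_mem_slitPlane {x : ℝ} (hx : 0 ≤ x) {z : ℂ} (hz : z ∈ slitPlane) :
    (x : ℂ) + z ∈ slitPlane := by
  rw [mem_slitPlane_iff] at hz ⊢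
  simp only [add_re, ofReal_re, add_im, ofReal_im, zero_add]
  exact hz.imp (fun h ↦ by linarith) id

lemma Complex.mem_slitPlane_of_norm_mul_le_re {z : ℂ} {c : ℝ} (hc : -1 < c) (hz : z ≠ 0)
    (h : ‖z‖ * c ≤ z.re) : z ∈ slitPlane := by
  rw [mem_slitPlane_iff]
  by_contra! hneg
  obtain ⟨hre, him⟩ := hneg
  have hnorm : ‖z‖ = -z.re := by
    rw [norm_def, normSq_apply, him, mul_zero, add_zero, ← sq, sqrt_sq_eq_abs, abs_of_nonpos hre]
  have hre0 : z.re = 0 := by rw [hnorm] at h; nlinarith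
  exact hz (Complex.ext hre0 him)

lemma Complex.norm_mul_cos_le_re_of_abs_arg_le {z : ℂ} {θ : ℝ} (hθ : θ ≤ π)
    (h : |z.arg| ≤ θ) : ‖z‖ * Real.cos θ ≤ z.re := by
  have hcos : Real.cos θ ≤ Real.cos z.arg := by
    rw [← Real.cos_abs z.arg]
    exact Real.cos_le_cos_of_nonneg_of_le_pi (abs_nonneg _) hθ h
  calc ‖z‖ * Real.cos θ ≤ ‖z‖ * Real.cos z.arg := mul_le_mul_of_nonneg_left hcos (norm_nonneg z)
    _ = z.re := norm_mul_cos_arg z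

section ShiftedPower

variable {α lam : ℝ}

lemma half_rpow_le_norm_ofReal_add_cpow_sub (hα0 : 0 < α) (hα1 : α ≤ 1) (hlam : 0 ≤ lam)
    {z : ℂ} (hz : (4 : ℝ) ^ α⁻¹ * lam ≤ ‖z‖) :
    ‖z‖ ^ α / 2 ≤ ‖((lam : ℂ) + z) ^ (α : ℂ) - (lam : ℂ) ^ (α : ℂ)‖ := by
  set t := ‖z‖
  have hlam_t : lam ≤ t :=
    (le_mul_of_one_le_left hlam (one_le_rpow (by norm_num) (inv_nonneg.2 hα0.le))).trans hz
  have hsmall : 4 * lam ^ α ≤ t ^ α :=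
    calc 4 * lam ^ α = ((4 : ℝ) ^ α⁻¹ * lam) ^ α := by
          rw [mul_rpow (by positivity) hlam, ← rpow_mul (by norm_num),
            inv_mul_cancel₀ hα0.ne', rpow_one]
      _ ≤ t ^ α := rpow_le_rpow (by positivity) hz hα0.le
  have hsub : t ^ α ≤ (t - lam) ^ α + lam ^ α := by
    simpa using rpow_add_le_add_rpow (sub_nonneg.2 hlam_t) hlam hα0.le hα1
  have hshift : (t - lam) ^ α ≤ ‖(lam : ℂ) + z‖ ^ α := by
    refine rpow_le_rpow (sub_nonneg.2 hlam_t) ?_ hα0.le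
    simpa [add_comm, abs_of_nonneg hlam] using norm_sub_norm_le z (-(lam : ℂ))
  calc t ^ α / 2 ≤ ‖(lam : ℂ) + z‖ ^ α - lam ^ α := by linarith
    _ = ‖((lam : ℂ) + z) ^ (α : ℂ)‖ - ‖(lam : ℂ) ^ (α : ℂ)‖ := by
      rw [norm_cpow_real, ← ofReal_cpow hlam, norm_real, norm_of_nonneg (rpow_nonneg hlam α)]
    _ ≤ _ := norm_sub_norm_le _ _

lemma exists_pos_mul_rpow_le_norm_ofReal_add_cpow_sub (hα0 : 0 < α) (hα1 : α ≤ 1)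
    {K : Set ℂ} (hK : IsCompact K) (hK0 : (0 : ℂ) ∉ K)
    (hslit : ∀ z ∈ K, (lam : ℂ) + z ∈ slitPlane) :
    ∃ m > 0, ∀ z ∈ K, m * ‖z‖ ^ α ≤ ‖((lam : ℂ) + z) ^ (α : ℂ) - (lam : ℂ) ^ (α : ℂ)‖ := by
  have hnorm : ∀ z ∈ K, 0 < ‖z‖ ^ α := fun z hz ↦
    rpow_pos_of_pos (norm_pos_iff.2 (ne_of_mem_of_not_mem hz hK0)) α
  have hcont : ContinuousOn
      (fun z : ℂ ↦ ‖((lam : ℂ) + z) ^ (α : ℂ) - (lam : ℂ) ^ (α : ℂ)‖ / ‖z‖ ^ α) K := by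
    intro z hz
    have hpow : ContinuousAt (fun w : ℂ ↦ ((lam : ℂ) + w) ^ (α : ℂ)) z :=
      (continuousAt_cpow_const (hslit z hz)).comp (by fun_prop)
    refine ContinuousAt.continuousWithinAt (ContinuousAt.div ?_ ?_ (hnorm z hz).ne')
    · exact (hpow.sub continuousAt_const).norm
    · exact (continuous_norm.rpow_const fun _ ↦ Or.inr hα0.le).continuousAt
  have hpos : ∀ z ∈ K,
      0 < ‖((lam : ℂ) + z) ^ (α : ℂ) - (lam : ℂ) ^ (α : ℂ)‖ / ‖z‖ ^ α := by
    intro z hz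
    refine div_pos (norm_pos_iff.2 (sub_ne_zero.2 fun h ↦ ?_)) (hnorm z hz)
    exact ne_of_mem_of_not_mem hz hK0
      (by simpa using cpow_ofReal_left_injective hα0 hα1 h)
  obtain ⟨m, hm, hmK⟩ := hK.exists_forall_le' hcont hpos
  exact ⟨m, hm, fun z hz ↦ (le_div_iff₀ (hnorm z hz)).1 (hmK z hz)⟩

end ShiftedPower

/-- Lower bound |(λ + z_ε)^α - λ^α| ≥ C |z_ε|^α on a sector, away from the origin. -/
theorem stmt_5 (α lam cε θ : ℝ) (hα0 : 0 < α) (hα1 : α < 1)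
    (hlam : 0 ≤ lam) (hcε : 0 < cε) (hθ : θ < π) :
    ∃ C > 0, ∀ z : ℂ, cε ≤ ‖z‖ → |z.arg| ≤ θ →
      C * (‖z‖) ^ α ≤
        ‖((lam : ℂ) + z) ^ (α : ℂ) - ((lam : ℂ)) ^ (α : ℂ)‖ := by
  set θ' := max θ 0
  have hθ'π : θ' < π := max_lt hθ pi_pos
  have hcos : -1 < Real.cos θ' := by
    rw [← Real.cos_pi]
    exact cos_lt_cos_of_nonneg_of_le_pi (le_max_right _ _) le_rfl hθ'π
  set R := (4 : ℝ) ^ α⁻¹ * lam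
  set K := Metric.closedBall (0 : ℂ) R ∩ {z | cε ≤ ‖z‖ ∧ ‖z‖ * Real.cos θ' ≤ z.re}
  have hK : IsCompact K := (isCompact_closedBall 0 R).inter_right
    ((isClosed_le continuous_const continuous_norm).inter
      (isClosed_le (by fun_prop) continuous_re))
  have hK0 : (0 : ℂ) ∉ K := fun h ↦ by
    simp only [K, Set.mem_inter_iff, Set.mem_ofPred_eq, norm_zero] at h
    linarith [h.2.1]
  obtain ⟨m, hm, hmK⟩ := exists_pos_mul_rpow_le_norm_ofReal_add_cpow_sub hα0 hα1.le hK hK0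
    fun z hz ↦ ofReal_add_mem_slitPlane hlam
      (mem_slitPlane_of_norm_mul_le_re hcos (ne_of_mem_of_not_mem hz hK0) hz.2.2)
  refine ⟨min m (1 / 2), lt_min hm one_half_pos, fun z hz harg ↦ ?_⟩
  rcases le_or_gt ‖z‖ R with hzR | hzR
  · refine (mul_le_mul_of_nonneg_right (min_le_left _ _) (by positivity)).trans (hmK z ?_)
    exact ⟨mem_closedBall_zero_iff.2 hzR, hz,
      norm_mul_cos_le_re_of_abs_arg_le hθ'π.le (harg.trans (le_max_left _ _))⟩
  · calc min m (1 / 2) * ‖z‖ ^ α ≤ 1 / 2 * ‖z‖ ^ α :=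
          mul_le_mul_of_nonneg_right (min_le_right _ _) (by positivity)
      _ = ‖z‖ ^ α / 2 := by ring
      _ ≤ _ := half_rpow_le_norm_ofReal_add_cpow_sub hα0 hα1.le hlam hzR.le
end

section
/- Let 0 < α < 1, τ > 0, λ > 0, r < 0 and s ∈ ℝ, and set b = τ(λ − r − is). The convolution quadrature weight d_0 = (1 + b)^α − (τλ)^α satisfies Re(d_0) > 0. -/
/-!
Write `z = 1 + b`. Then `Re z = 1 + τ(λ - r) > τλ`, and `Re (z ^ α) = ‖z‖ ^ α cos (α arg z)`
dominates `(Re z) ^ α = ‖z‖ ^ α (cos (arg z)) ^ α` because `cos θ ^ α ≤ cos (α θ)` for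
`|θ| < π/2`, which is the concavity of `log ∘ cos` between `0` and `θ`.
-/

open Real Set

theorem Real.concaveOn_log_cos : ConcaveOn ℝ (Ioo (-(π / 2)) (π / 2)) (fun t ↦ log (cos t)) := by
  have hderiv : ∀ t ∈ Ioo (-(π / 2)) (π / 2), HasDerivAt (fun t ↦ log (cos t)) (-tan t) t := by
    intro t ht
    simpa [tan_eq_sin_div_cos, neg_div] using (hasDerivAt_cos t).log (cos_pos_of_mem_Ioo ht).ne'
  refine AntitoneOn.concaveOn_of_deriv (convex_Ioo _ _)
    (fun t ht ↦ (hderiv t ht).continuousAt.continuousWithinAt) ?_ ?_ <;>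
    rw [isOpen_Ioo.interior_eq]
  · exact fun t ht ↦ (hderiv t ht).differentiableAt.differentiableWithinAt
  · intro u hu v hv huv
    rw [(hderiv u hu).deriv, (hderiv v hv).deriv, neg_le_neg_iff]
    exact strictMonoOn_tan.monotoneOn hu hv huv

theorem Real.cos_rpow_le_cos_mul {θ a : ℝ} (hθ : θ ∈ Ioo (-(π / 2)) (π / 2))
    (ha₀ : 0 ≤ a) (ha₁ : a ≤ 1) : cos θ ^ a ≤ cos (a * θ) := by
  have h0 : (0 : ℝ) ∈ Ioo (-(π / 2)) (π / 2) := ⟨by linarith [pi_pos], by linarith [pi_pos]⟩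
  have haθ : a * θ ∈ Ioo (-(π / 2)) (π / 2) := by
    have := abs_lt.2 hθ
    rw [mem_Ioo, ← abs_lt, abs_mul, abs_of_nonneg ha₀]
    nlinarith [abs_nonneg θ]
  have hlog : a * log (cos θ) ≤ log (cos (a * θ)) := by
    simpa using concaveOn_log_cos.2 hθ h0 ha₀ (sub_nonneg.2 ha₁) (by ring)
  calc cos θ ^ a = exp (a * log (cos θ)) := by
        rw [rpow_def_of_pos (cos_pos_of_mem_Ioo hθ), mul_comm]
    _ ≤ exp (log (cos (a * θ))) := exp_le_exp.2 hlog
    _ = cos (a * θ) := exp_log (cos_pos_of_mem_Ioo haθ)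

theorem Complex.re_rpow_le_re_cpow {z : ℂ} (hz : 0 < z.re) {a : ℝ} (ha₀ : 0 ≤ a) (ha₁ : a ≤ 1) :
    z.re ^ a ≤ (z ^ (a : ℂ)).re := by
  have hz₀ : z ≠ 0 := fun h ↦ by simp [h] at hz
  have harg : z.arg ∈ Ioo (-(π / 2)) (π / 2) :=
    abs_lt.1 (abs_arg_lt_pi_div_two_iff.2 (Or.inl hz))
  have hcos : 0 ≤ Real.cos z.arg := (cos_pos_of_mem_Ioo harg).le
  calc z.re ^ a = ‖z‖ ^ a * Real.cos z.arg ^ a := by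
        rw [← mul_rpow (norm_nonneg z) hcos, norm_mul_cos_arg]
    _ ≤ ‖z‖ ^ a * Real.cos (a * z.arg) :=
        mul_le_mul_of_nonneg_left (cos_rpow_le_cos_mul harg ha₀ ha₁) (by positivity)
    _ = (z ^ (a : ℂ)).re := by rw [cpow_ofReal_re, mul_comm a]

/-- The leading convolution quadrature weight d₀ = (1+b)^α − (τλ)^α has positive real part. -/
theorem stmt_9 (α τ lam r s : ℝ) (hα0 : 0 < α) (hα1 : α < 1)
    (hτ : 0 < τ) (hlam : 0 < lam) (hr : r < 0)
    (b : ℂ) (hb : b = (τ : ℂ) * ((lam : ℂ) - (r : ℂ) - Complex.I * (s : ℂ))) :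
    0 < ((1 + b) ^ (α : ℂ) - ((τ * lam : ℝ) : ℂ) ^ (α : ℂ)).re := by
  have hτlam : 0 < τ * lam := mul_pos hτ hlam
  have hre : (1 + b).re = 1 + τ * lam - τ * r := by subst hb; simp [mul_sub, add_sub_assoc]
  have hlt : τ * lam < (1 + b).re := by nlinarith
  have hpow : (τ * lam) ^ α < (1 + b).re ^ α := rpow_lt_rpow hτlam.le hlt hα0
  rw [Complex.sub_re, ← Complex.ofReal_cpow hτlam.le, Complex.ofReal_re, sub_pos]
  exact hpow.trans_le (Complex.re_rpow_le_re_cpow (hτlam.trans hlt) hα0.le hα1.le)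
end

section
/- For τ > 0 and complex z with |zτ| ≤ π/sin θ and |arg z| = θ for some θ ∈ (π/2, π), the BDF2 symbol z_τ = [(1 − e^{−zτ}) + (1 − e^{−zτ})²/2]/τ satisfies z_τ = z + O(τ² z³), i.e. |z_τ − z| ≤ C τ² |z|³ with C depending only on θ; moreover there exist constants 0 < c ≤ C' with c|z| ≤ |z_τ| ≤ C'|z| on this range. -/
/-!
Put `w = zτ`. Since `arg (zτ) = arg z` and `‖zτ‖ = ‖z‖τ`, all three estimates are the case
`τ = 1` rescaled, for `w` on the two segments `|arg w| = θ`, `‖w‖ ≤ R := π / sin θ`.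

With `ρ` the order-3 Taylor remainder of `e^{-w}`, `‖ρ‖ ≤ e^R ‖w‖³` for `‖w‖ ≤ R`, and
`δ(e^{-w}) - w` is a polynomial in `w` and `ρ` without terms of order below 3: this is the
consistency bound, and the upper bound follows from it. For the lower bound, the difference
quotient `δ(e^{-w}) / w` extends continuously to `w = 0` with value `1`, and it does not
vanish on the segments: `δ(ζ) = (1 - ζ)(3 - ζ)/2`, `Re w < 0` gives `|e^{-w}| > 1`, and
`0 < |Im w| ≤ π` excludes `e^{-w} = 3`. Compactness gives `c`.
-/

open Real Complex

theorem exists_mul_norm_sub_le_norm_sub_of_isCompact {𝕜 E : Type*} [NontriviallyNormedField 𝕜]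
    [NormedAddCommGroup E] [NormedSpace 𝕜 E] {f : 𝕜 → E} {K : Set 𝕜} {a : 𝕜}
    (hK : IsCompact K) (hf : Continuous f) (ha : deriv f a ≠ 0)
    (hne : ∀ w ∈ K, w ≠ a → f w ≠ f a) :
    ∃ c > 0, ∀ w ∈ K, c * ‖w - a‖ ≤ ‖f w - f a‖ := by
  have hg : ContinuousOn (dslope f a) K :=
    ((continuousOn_dslope Filter.univ_mem).2
      ⟨hf.continuousOn, differentiableAt_of_deriv_ne_zero ha⟩).mono (Set.subset_univ _)
  have hg0 : ∀ w ∈ K, dslope f a w ≠ 0 := by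
    intro w hw
    rcases eq_or_ne w a with rfl | hwa
    · rwa [dslope_same]
    · intro h
      apply hne w hw hwa
      rw [← sub_eq_zero, ← sub_smul_dslope, h, smul_zero]
  rcases K.eq_empty_or_nonempty with rfl | hKne
  · exact ⟨1, one_pos, by simp⟩
  obtain ⟨w₀, hw₀, hmin⟩ := hK.exists_isMinOn hKne hg.norm
  refine ⟨‖dslope f a w₀‖, norm_pos_iff.2 (hg0 w₀ hw₀), fun w hw => ?_⟩
  rw [← sub_smul_dslope, norm_smul, mul_comm]
  gcongr
  exact hmin hw

/-- `δ(e^{-w})`; the paper's `z_τ` is `bdf2Symbol (z * τ) / τ`. -/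
noncomputable def bdf2Symbol (w : ℂ) : ℂ := (1 - exp (-w)) + (1 - exp (-w)) ^ 2 / 2

lemma bdf2Symbol_eq_mul (w : ℂ) :
    bdf2Symbol w = (1 - exp (-w)) * (3 - exp (-w)) / 2 := by
  unfold bdf2Symbol; ring

lemma bdf2Symbol_zero : bdf2Symbol 0 = 0 := by simp [bdf2Symbol]

lemma continuous_bdf2Symbol : Continuous bdf2Symbol := by
  unfold bdf2Symbol; fun_prop

lemma hasDerivAt_bdf2Symbol_zero : HasDerivAt bdf2Symbol 1 0 := by
  have h : HasDerivAt (fun w : ℂ => 1 - exp (-w)) 1 0 := by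
    simpa using ((hasDerivAt_neg (0 : ℂ)).cexp).const_sub 1
  exact (h.fun_add ((h.fun_pow 2).div_const 2)).congr_deriv (by simp)

lemma exists_norm_bdf2Symbol_sub_le {R : ℝ} (hR : 0 ≤ R) :
    ∃ C > 0, ∀ w : ℂ, ‖w‖ ≤ R → ‖bdf2Symbol w - w‖ ≤ C * ‖w‖ ^ 3 := by
  set E := Real.exp R
  refine ⟨1 / 2 + R / 8 + E * (1 + R + R ^ 2 / 2) + E ^ 2 * R ^ 3 / 2, by positivity,
    fun w hw => ?_⟩
  set ρ := exp (-w) - (1 - w + w ^ 2 / 2)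
  set r := ‖w‖
  have hρ : ‖ρ‖ ≤ E * r ^ 3 := by
    have h := norm_exp_sub_sum_le_norm_mul_exp (-w) 3
    norm_num [Finset.sum_range_succ, Nat.factorial] at h
    calc ‖ρ‖ ≤ r ^ 3 * Real.exp r := by convert h using 2; ring
      _ ≤ _ := by rw [mul_comm]; gcongr; exact Real.exp_le_exp.mpr hw
  have hid : bdf2Symbol w - w =
      -w ^ 3 / 2 + w ^ 4 / 8 + (-ρ) * (1 + w + -(w ^ 2 / 2)) + ρ ^ 2 / 2 := by
    rw [bdf2Symbol, show exp (-w) = 1 - w + w ^ 2 / 2 + ρ by ring]; ring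
  have hsplit : ‖bdf2Symbol w - w‖ ≤
      r ^ 3 / 2 + r ^ 4 / 8 + ‖ρ‖ * (1 + r + r ^ 2 / 2) + ‖ρ‖ ^ 2 / 2 := by
    rw [hid]
    refine (norm_add₄_le ..).trans ?_
    simp only [norm_neg, norm_mul, norm_div, norm_pow, RCLike.norm_ofNat]
    gcongr
    refine (norm_add₃_le ..).trans ?_
    simp [r]
  have hr : 0 ≤ r := norm_nonneg w
  have hr4 : r ^ 4 ≤ R * r ^ 3 := by rw [pow_succ']; gcongr
  have hρ2 : ‖ρ‖ ^ 2 ≤ E ^ 2 * R ^ 3 * r ^ 3 := calc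
    ‖ρ‖ ^ 2 ≤ (E * r ^ 3) ^ 2 := by gcongr
    _ = E ^ 2 * r ^ 3 * r ^ 3 := by ring
    _ ≤ E ^ 2 * R ^ 3 * r ^ 3 := by gcongr
  have hρ1 : ‖ρ‖ * (1 + r + r ^ 2 / 2) ≤ E * r ^ 3 * (1 + R + R ^ 2 / 2) := by gcongr
  linarith

lemma bdf2Symbol_ne_zero {w : ℂ} (hre : w.re < 0) (him₀ : w.im ≠ 0) (him : |w.im| ≤ π) :
    bdf2Symbol w ≠ 0 := by
  have hexp_ne_one : exp (-w) ≠ 1 := by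
    intro h
    have := congrArg norm h
    rw [norm_exp, norm_one, Real.exp_eq_one_iff, neg_re] at this
    linarith
  have hexp_ne_three : exp (-w) ≠ 3 := by
    rw [← exp_log three_ne_zero, Ne, exp_eq_exp_iff_exists_int]
    rintro ⟨n, hn⟩
    have him' : w.im = -(2 * π * n) := by
      have := congrArg im hn
      simp [log_im] at this
      linarith
    have hn0 : n ≠ 0 := by rintro rfl; simp at him'; exact him₀ him'
    have : (1 : ℝ) ≤ |(n : ℝ)| := by exact_mod_cast Int.one_le_abs hn0
    rw [him', abs_neg, abs_mul, abs_of_pos (by positivity : 0 < 2 * π)] at him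
    nlinarith [Real.pi_pos]
  rw [bdf2Symbol_eq_mul]
  exact div_ne_zero (mul_ne_zero (sub_ne_zero.2 hexp_ne_one.symm)
    (sub_ne_zero.2 hexp_ne_three.symm)) two_ne_zero

/-- The segments `{r e^{±iθ} : 0 ≤ r ≤ R}`, described by closed conditions. -/
def symmetricRays (θ R : ℝ) : Set ℂ :=
  {w | ‖w‖ ≤ R ∧ w.re = ‖w‖ * Real.cos θ ∧ |w.im| = ‖w‖ * Real.sin θ}

lemma isCompact_symmetricRays (θ R : ℝ) : IsCompact (symmetricRays θ R) := by
  refine Metric.isCompact_of_isClosed_isBounded ?_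
    ((Metric.isBounded_closedBall (x := (0 : ℂ)) (r := R)).subset fun w hw => by simpa using hw.1)
  exact (isClosed_le continuous_norm continuous_const).inter
    ((isClosed_eq continuous_re (by fun_prop)).inter (isClosed_eq (by fun_prop) (by fun_prop)))

lemma mem_symmetricRays {θ R : ℝ} {w : ℂ} (harg : |arg w| = θ) (hw : ‖w‖ ≤ R) :
    w ∈ symmetricRays θ R := by
  have hsin : 0 ≤ Real.sin θ :=
    Real.sin_nonneg_of_nonneg_of_le_pi (harg ▸ abs_nonneg _) (harg ▸ abs_arg_le_pi w)
  refine ⟨hw, ?_, ?_⟩ <;>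
    rcases (abs_eq (harg ▸ abs_nonneg _)).1 harg with h | h <;>
    simp [← norm_mul_cos_arg, ← norm_mul_sin_arg, h, abs_mul, abs_of_nonneg hsin]

lemma bdf2Symbol_ne_zero_of_mem_symmetricRays {θ R : ℝ} (hθ1 : π / 2 < θ) (hθ2 : θ < π)
    (hR : R * Real.sin θ ≤ π) {w : ℂ} (hw : w ∈ symmetricRays θ R) (hw0 : w ≠ 0) :
    bdf2Symbol w ≠ 0 := by
  obtain ⟨hwR, hre, him⟩ := hw
  have hnorm : 0 < ‖w‖ := norm_pos_iff.2 hw0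
  have hcos : Real.cos θ < 0 := Real.cos_neg_of_pi_div_two_lt_of_lt hθ1 (by linarith)
  have hsin : 0 < Real.sin θ := Real.sin_pos_of_pos_of_lt_pi (by linarith [Real.pi_pos]) hθ2
  refine bdf2Symbol_ne_zero (by rw [hre]; nlinarith) (fun h => ?_) ?_
  · rw [h, abs_zero] at him; nlinarith
  · rw [him]; nlinarith

theorem exists_bdf2Symbol_bounds {θ : ℝ} (hθ1 : π / 2 < θ) (hθ2 : θ < π) :
    ∃ C > 0, ∃ c > 0, ∃ C' : ℝ, c ≤ C' ∧ ∀ w ∈ symmetricRays θ (π / Real.sin θ),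
      ‖bdf2Symbol w - w‖ ≤ C * ‖w‖ ^ 3 ∧ c * ‖w‖ ≤ ‖bdf2Symbol w‖ ∧
        ‖bdf2Symbol w‖ ≤ C' * ‖w‖ := by
  have hsin : 0 < Real.sin θ := Real.sin_pos_of_pos_of_lt_pi (by linarith [Real.pi_pos]) hθ2
  set R := π / Real.sin θ
  have hR : 0 < R := div_pos Real.pi_pos hsin
  obtain ⟨C, hC, hcons⟩ := exists_norm_bdf2Symbol_sub_le hR.le
  obtain ⟨c, hc, hlow⟩ := exists_mul_norm_sub_le_norm_sub_of_isCompact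
    (isCompact_symmetricRays θ R) continuous_bdf2Symbol
    (by rw [hasDerivAt_bdf2Symbol_zero.deriv]; exact one_ne_zero)
    (fun w hw hw0 => by
      rw [bdf2Symbol_zero]
      exact bdf2Symbol_ne_zero_of_mem_symmetricRays hθ1 hθ2 (by simp [R, hsin.ne']) hw hw0)
  refine ⟨C, hC, min c 1, by positivity, 1 + C * R ^ 2, ?_, fun w hw => ⟨hcons w hw.1, ?_, ?_⟩⟩
  · nlinarith [min_le_right c 1]
  · exact (mul_le_mul_of_nonneg_right (min_le_left c 1) (norm_nonneg w)).trans
      (by simpa [bdf2Symbol_zero] using hlow w hw)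
  · have hw3 : ‖w‖ ^ 3 ≤ R ^ 2 * ‖w‖ := by
      rw [pow_succ]; gcongr; exact hw.1
    calc ‖bdf2Symbol w‖ ≤ ‖w‖ + ‖bdf2Symbol w - w‖ := norm_le_norm_add_norm_sub' _ _
      _ ≤ ‖w‖ + C * (R ^ 2 * ‖w‖) := by gcongr; exact (hcons w hw.1).trans (by gcongr)
      _ = (1 + C * R ^ 2) * ‖w‖ := by ring

/-- BDF2 symbol consistency: z_τ = [(1 − e^{−zτ}) + (1 − e^{−zτ})²/2]/τ = z + O(τ²z³),
together with the two-sided bound c|z| ≤ |z_τ| ≤ C'|z|, on |arg z| = θ, |zτ| ≤ π/sin θ. -/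
theorem stmt_11 (θ : ℝ) (hθ1 : π / 2 < θ) (hθ2 : θ < π) :
    ∃ C > 0, ∃ c > 0, ∃ C' : ℝ, c ≤ C' ∧
      ∀ τ : ℝ, 0 < τ → ∀ z : ℂ, |z.arg| = θ →
        ‖(z * (τ : ℂ))‖ ≤ π / Real.sin θ →
        ‖(((1 - Complex.exp (-z * (τ : ℂ))) +
            (1 - Complex.exp (-z * (τ : ℂ))) ^ 2 / 2) / (τ : ℂ) - z)‖ ≤
          C * τ ^ 2 * (‖z‖) ^ 3 ∧
        c * ‖z‖ ≤ ‖(((1 - Complex.exp (-z * (τ : ℂ))) +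
            (1 - Complex.exp (-z * (τ : ℂ))) ^ 2 / 2) / (τ : ℂ))‖ ∧
        ‖(((1 - Complex.exp (-z * (τ : ℂ))) +
            (1 - Complex.exp (-z * (τ : ℂ))) ^ 2 / 2) / (τ : ℂ))‖ ≤
          C' * ‖z‖ := by
  obtain ⟨C, hC, c, hc, C', hcC', hbounds⟩ := exists_bdf2Symbol_bounds hθ1 hθ2
  refine ⟨C, hC, c, hc, C', hcC', fun τ hτ z harg hzτ => ?_⟩
  obtain ⟨hcons, hlow, hup⟩ :=
    hbounds (z * τ) (mem_symmetricRays (by rwa [arg_mul_real hτ]) hzτ)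
  have hnorm_τ : ‖(τ : ℂ)‖ = τ := by simp [hτ.le]
  rw [norm_mul, hnorm_τ] at hcons hlow hup
  have hsub : bdf2Symbol (z * τ) / τ - z = (bdf2Symbol (z * τ) - z * τ) / τ := by
    rw [sub_div, mul_div_cancel_right₀ _ (ofReal_ne_zero.2 hτ.ne')]
  simp only [neg_mul, show ∀ w : ℂ, (1 - exp (-w)) + (1 - exp (-w)) ^ 2 / 2 = bdf2Symbol w
    from fun _ => rfl, hsub, norm_div, hnorm_τ]
  rw [div_le_iff₀ hτ, le_div_iff₀ hτ, div_le_iff₀ hτ]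
  exact ⟨hcons.trans_eq (by ring), (mul_assoc _ _ _).trans_le hlow, hup.trans_eq (by ring)⟩
end
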